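/- Let p, q be unit quaternions and α_i, β_i, α_j, β_j imaginary quaternions. The map sending the tangent vector (p α, q β) at (p,q) to the tangent vector (−α p̄, q(β − α) p̄) at (p̄, q p̄) preserves the nearly Kähler metric: g_{(p̄, qp̄)}((−α_i p̄, q(β_i−α_i) p̄), (−α_j p̄, q(β_j−α_j) p̄)) = (2/3)(2⟨α_i,α_j⟩ + 2⟨β_i,β_j⟩ − ⟨β_i,α_j⟩ − ⟨α_i,β_j⟩) = g_{(p,q)}((p α_i, q β_i), (p α_j, q β_j)). -/
import Mathlib


open scoped Quaternion RealInnerProductSpace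

/-- The nearly Kähler metric on `T_p S³ ⊕ T_q S³` (explicit formula). -/
noncomputable def g (p q : ℍ[ℝ]) (Z Z' : ℍ[ℝ] × ℍ[ℝ]) : ℝ :=
  (4 / 3) * (⟪Z.1, Z'.1⟫ + ⟪Z.2, Z'.2⟫)
    - (2 / 3) * (⟪p⁻¹ * Z.1, q⁻¹ * Z'.2⟫ + ⟪p⁻¹ * Z'.1, q⁻¹ * Z.2⟫)

lemma inner_mul_right_unit (u a b : ℍ[ℝ]) (h : u * star u = 1) :
    ⟪a * u, b * u⟫ = ⟪a, b⟫ := by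
  simp only [Quaternion.inner_def, star_mul, mul_assoc]
  rw [← mul_assoc u, h, one_mul]

lemma re_mul_comm (a b : ℍ[ℝ]) : (a * b).re = (b * a).re := by
  simp only [Quaternion.re_mul]; ring

lemma inner_mul_left_unit (u a b : ℍ[ℝ]) (h : star u * u = 1) :
    ⟪u * a, u * b⟫ = ⟪a, b⟫ := by
  simp only [Quaternion.inner_def, star_mul]
  rw [re_mul_comm (u * a),
    show star b * star u * (u * a) = star b * (star u * u * a) by noncomm_ring, h,
    one_mul, re_mul_comm]

/-- The map sending the tangent vector `(pα, qβ)` at `(p,q)` to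
`(−α p̄, q(β − α) p̄)` at `(p̄, q p̄)` preserves the nearly Kähler metric. -/
theorem g_star_invariant (p q : ℍ[ℝ]) (hp : ‖p‖ = 1) (hq : ‖q‖ = 1)
    (αi βi αj βj : ℍ[ℝ]) (hαi : αi.re = 0) (hβi : βi.re = 0)
    (hαj : αj.re = 0) (hβj : βj.re = 0) :
    g (star p) (q * star p)
        (-(αi * star p), q * (βi - αi) * star p)
        (-(αj * star p), q * (βj - αj) * star p) =
      (2 / 3) * (2 * ⟪αi, αj⟫ + 2 * ⟪βi, βj⟫ - ⟪βi, αj⟫ - ⟪αi, βj⟫) ∧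
    (2 / 3) * (2 * ⟪αi, αj⟫ + 2 * ⟪βi, βj⟫ - ⟪βi, αj⟫ - ⟪αi, βj⟫) =
      g p q (p * αi, q * βi) (p * αj, q * βj) := by
  have hps : star p * p = 1 := by
    rw [Quaternion.star_mul_self, Quaternion.normSq_eq_norm_mul_self, hp]; norm_num
  have hps' : p * star p = 1 := by
    rw [Quaternion.self_mul_star, Quaternion.normSq_eq_norm_mul_self, hp]; norm_num
  have hqs : star q * q = 1 := by
    rw [Quaternion.star_mul_self, Quaternion.normSq_eq_norm_mul_self, hq]; norm_num
  have hqs' : q * star q = 1 := by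
    rw [Quaternion.self_mul_star, Quaternion.normSq_eq_norm_mul_self, hq]; norm_num
  have hpinv : p⁻¹ = star p := by
    exact inv_eq_of_mul_eq_one_right hps'
  have hqinv : q⁻¹ = star q := by
    exact inv_eq_of_mul_eq_one_right hqs'
  have hspinv : (star p)⁻¹ = p := by
    exact inv_eq_of_mul_eq_one_right hps
  have hqpinv : (q * star p)⁻¹ = p * star q := by
    refine inv_eq_of_mul_eq_one_right ?_
    rw [show q * star p * (p * star q) = q * ((star p * p) * star q) by noncomm_ring, hps,
      one_mul, hqs']
  have hstarstar : star (star p) * star p = 1 := by rw [star_star]; exact hps'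
  have key1 : ∀ a b : ℍ[ℝ], ⟪a * star p, b * star p⟫ = ⟪a, b⟫ := fun a b =>
    inner_mul_right_unit _ _ _ (by rw [star_star]; exact hps)
  have key2 : ∀ a b : ℍ[ℝ], ⟪p * a, p * b⟫ = ⟪a, b⟫ := fun a b =>
    inner_mul_left_unit _ _ _ hps
  have key3 : ∀ a b : ℍ[ℝ], ⟪q * a, q * b⟫ = ⟪a, b⟫ := fun a b =>
    inner_mul_left_unit _ _ _ hqs
  constructor
  · simp only [g, hspinv, hqpinv]
    have e1 : ⟪(-(αi * star p) : ℍ[ℝ]), -(αj * star p)⟫ = ⟪αi, αj⟫ := by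
      rw [inner_neg_neg, key1]
    have e2 : ⟪(q * (βi - αi) * star p : ℍ[ℝ]), q * (βj - αj) * star p⟫
        = ⟪βi - αi, βj - αj⟫ := by rw [key1, key3]
    have e3 : ⟪(p * -(αi * star p) : ℍ[ℝ]), p * star q * (q * (βj - αj) * star p)⟫
        = -⟪αi, βj - αj⟫ := by
      rw [show p * star q * (q * (βj - αj) * star p)
          = p * ((star q * q) * (βj - αj) * star p) by noncomm_ring, hqs, one_mul,
        mul_neg, inner_neg_left,
        show p * (αi * star p) = p * αi * star p by noncomm_ring,
        show p * ((βj - αj) * star p) = p * (βj - αj) * star p by noncomm_ring,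
        key1, key2]
    have e4 : ⟪(p * -(αj * star p) : ℍ[ℝ]), p * star q * (q * (βi - αi) * star p)⟫
        = -⟪αj, βi - αi⟫ := by
      rw [show p * star q * (q * (βi - αi) * star p)
          = p * ((star q * q) * (βi - αi) * star p) by noncomm_ring, hqs, one_mul,
        mul_neg, inner_neg_left,
        show p * (αj * star p) = p * αj * star p by noncomm_ring,
        show p * ((βi - αi) * star p) = p * (βi - αi) * star p by noncomm_ring,
        key1, key2]
    simp only [e1, e2, e3, e4, inner_sub_left, inner_sub_right]
    rw [real_inner_comm αj βi, real_inner_comm αj αi, real_inner_comm αi αj]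
    ring
  · simp only [g, hpinv, hqinv]
    have f1 : ⟪(p * αi : ℍ[ℝ]), p * αj⟫ = ⟪αi, αj⟫ := key2 _ _
    have f2 : ⟪(q * βi : ℍ[ℝ]), q * βj⟫ = ⟪βi, βj⟫ := key3 _ _
    have f3 : ⟪(star p * (p * αi) : ℍ[ℝ]), star q * (q * βj)⟫ = ⟪αi, βj⟫ := by
      rw [← mul_assoc, ← mul_assoc, hps, hqs, one_mul, one_mul]
    have f4 : ⟪(star p * (p * αj) : ℍ[ℝ]), star q * (q * βi)⟫ = ⟪αj, βi⟫ := by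
      rw [← mul_assoc, ← mul_assoc, hps, hqs, one_mul, one_mul]
    simp only [f1, f2, f3, f4]
    rw [real_inner_comm αj βi]
    ring
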